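/- Let F be a finite family of integer intervals satisfying the facet conditions (binary tree rooted at (1,c), leaves a prescribed set of unit intervals, conditions on children lengths). If an open interval (α,β) with 1 ≤ α < β ≤ c contains no leaf of the tree of F (i.e., contains none of the prescribed unit intervals), then (α,β) ∉ F. -/

import Mathlib

namespace ScrollComb

/-- Open intervals with integer endpoints, identified with pairs `(a, b)`, `a < b`. -/
abbrev Iv : Type := ℤ × ℤ

/-- `I` is contained in `J` as open real intervals. -/
def Sub (I J : Iv) : Prop := J.1 ≤ I.1 ∧ I.2 ≤ J.2

/-- The length of an interval. -/
def len (I : Iv) : ℤ := I.2 - I.1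

/-- Two open intervals with integer endpoints are disjoint. -/
def Disj (I J : Iv) : Prop := I.2 ≤ J.1 ∨ J.2 ≤ I.1

/-- `I` is a child of `J` in the Hasse diagram of `(F, ⊆)`:  `I ⊊ J` and nothing of `F`
lies strictly between them. -/
def IsChild (F : Finset Iv) (I J : Iv) : Prop :=
  I ∈ F ∧ J ∈ F ∧ Sub I J ∧ I ≠ J ∧
    ∀ K ∈ F, Sub I K → Sub K J → K = I ∨ K = J

/-- `I` is a leaf (a minimal element) of the family `F`. -/
def IsLeaf (F : Finset Iv) (I : Iv) : Prop :=
  I ∈ F ∧ ∀ K ∈ F, Sub K I → K = I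

/-- The prescribed leaves set `𝔏_α`: the unit intervals `(β, β+1)` for
`β ∈ {α, …, α+ℓ} ∪ {c-d+ℓ-1, …, c-1}`. -/
noncomputable def leavesSet (c d α ℓ : ℤ) : Finset Iv :=
  (Finset.Icc α (α + ℓ) ∪ Finset.Icc (c - d + ℓ - 1) (c - 1)).image fun β => (β, β + 1)

/-- The structural conditions on a facet family:  a non-crossing family of open integer
subintervals of `(1, c)` whose Hasse diagram under inclusion is a rooted binary tree with
root `(1, c)`, satisfying the length conditions on nodes with one child resp. two children. -/
structure IsTreeFam (c : ℤ) (F : Finset Iv) : Prop where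
  bounds : ∀ I ∈ F, 1 ≤ I.1 ∧ I.1 < I.2 ∧ I.2 ≤ c
  root_mem : ((1 : ℤ), c) ∈ F
  noncrossing : ∀ I ∈ F, ∀ J ∈ F, Disj I J ∨ Sub I J ∨ Sub J I
  binary : ∀ J ∈ F, {I | IsChild F I J}.ncard ≤ 2
  one_child : ∀ J ∈ F, ∀ I, IsChild F I J → (∀ I', IsChild F I' J → I' = I) →
    len J = len I + 1 ∧ (J.1 < I.1 → (J.1, J.1 + 1) ∉ F) ∧ (I.2 < J.2 → (I.2, I.2 + 1) ∉ F)
  two_children : ∀ J ∈ F, ∀ I₁ I₂, IsChild F I₁ J → IsChild F I₂ J → I₁ ≠ I₂ →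
    Disj I₁ I₂ ∧ len I₁ + len I₂ = len J

/-- A facet family with prescribed leaves data `(α, ℓ)`. -/
structure IsScrollFacetWith (c d α ℓ : ℤ) (F : Finset Iv) : Prop where
  tree : IsTreeFam c F
  α_lb : 1 ≤ α
  α_ub : α ≤ c - d - 2
  ℓ_lb : 2 ≤ ℓ
  ℓ_ub : ℓ ≤ d + 1
  leaves : ∀ I, IsLeaf F I ↔ I ∈ leavesSet c d α ℓ

/-- A facet of the initial complex of the fiber cone of a rational normal scroll. -/
def IsScrollFacet (c d : ℤ) (F : Finset Iv) : Prop :=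
  ∃ α ℓ, IsScrollFacetWith c d α ℓ F

theorem Sub.trans {I J K : Iv} (hIJ : Sub I J) (hJK : Sub J K) : Sub I K :=
  ⟨hJK.1.trans hIJ.1, hIJ.2.trans hJK.2⟩

theorem Sub.eq_of_len_le {I J : Iv} (h : Sub I J) (hlen : len J ≤ len I) : I = J := by
  obtain ⟨h₁, h₂⟩ := h
  unfold len at hlen
  exact Prod.ext (by omega) (by omega)

/-- A subinterval of minimal length among the members of `F` inside `I` is a leaf. -/
theorem exists_isLeaf_sub {F : Finset Iv} {I : Iv} (hI : I ∈ F) :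
    ∃ L, IsLeaf F L ∧ Sub L I := by
  classical
  obtain ⟨L, hL, hLmin⟩ := (F.filter (Sub · I)).exists_min_image len
    ⟨I, Finset.mem_filter.mpr ⟨hI, le_rfl, le_rfl⟩⟩
  rw [Finset.mem_filter] at hL
  refine ⟨L, ⟨hL.1, fun K hK hKL => hKL.eq_of_len_le ?_⟩, hL.2⟩
  exact hLmin K (Finset.mem_filter.mpr ⟨hK, hKL.trans hL.2⟩)

theorem not_mem_of_no_leaf_general (F : Finset Iv) (a b : ℤ)
    (hnoleaf : ∀ L : Iv, IsLeaf F L → ¬ Sub L (a, b)) :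
    (a, b) ∉ F := fun hmem =>
  let ⟨L, hL, hLsub⟩ := exists_isLeaf_sub hmem
  hnoleaf L hL hLsub

/-- If an open interval `(a,b) ⊆ (1,c)` contains no leaf of the tree of a
facet family `F`, then `(a,b) ∉ F`. -/
theorem not_mem_of_no_leaf (c d : ℤ) (F : Finset Iv) (hF : IsScrollFacet c d F)
    (a b : ℤ) (ha : 1 ≤ a) (hab : a < b) (hb : b ≤ c)
    (hnoleaf : ∀ L : Iv, IsLeaf F L → ¬ Sub L (a, b)) :
    (a, b) ∉ F :=
  not_mem_of_no_leaf_general F a b hnoleaf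

end ScrollComb
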